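/- Let S₀^(R) be the set of qubit states (𝟙 + s·σ)/2 with s ∈ R = {s ∈ ℝ³ : |s| ≤ 1, s·n = 0} for a unit vector n. A pair of unbiased qubit observables {A^{a₁}, A^{a₂}} is S₀^(R)-compatible if and only if |P_R(a₁+a₂)| + |P_R(a₁−a₂)| ≤ 2, where P_R is the orthogonal projection of ℝ³ onto the plane {s : s·n = 0}. -/

import Mathlib

open Matrix ComplexOrder

noncomputable def σx : Matrix (Fin 2) (Fin 2) ℂ := !![0, 1; 1, 0]
noncomputable def σy : Matrix (Fin 2) (Fin 2) ℂ := !![0, -Complex.I; Complex.I, 0]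
noncomputable def σz : Matrix (Fin 2) (Fin 2) ℂ := !![1, 0; 0, -1]

/-- `a · σ` for `a ∈ ℝ³`. -/
noncomputable def dotSigma (a : EuclideanSpace ℝ (Fin 3)) : Matrix (Fin 2) (Fin 2) ℂ :=
  (a 0 : ℂ) • σx + (a 1 : ℂ) • σy + (a 2 : ℂ) • σz

/-- The unbiased qubit observable `A^a(±) = (𝟙 ± a·σ)/2`. -/
noncomputable def ubObs (a : EuclideanSpace ℝ (Fin 3)) : Bool → Matrix (Fin 2) (Fin 2) ℂ :=
  fun b => (1/2 : ℂ) • ((1 : Matrix (Fin 2) (Fin 2) ℂ) + (if b then (1:ℂ) else -1) • dotSigma a)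

/-- The qubit state with Bloch vector `s`. -/
noncomputable def qubitState (s : EuclideanSpace ℝ (Fin 3)) : Matrix (Fin 2) (Fin 2) ℂ :=
  (1/2 : ℂ) • ((1 : Matrix (Fin 2) (Fin 2) ℂ) + dotSigma s)

/-- A pair of binary POVMs is compatible if it admits a joint POVM. -/
def PairCompatible (A B : Bool → Matrix (Fin 2) (Fin 2) ℂ) : Prop :=
  ∃ G : Bool → Bool → Matrix (Fin 2) (Fin 2) ℂ,
    (∀ x y, (G x y).PosSemidef) ∧
    (∑ x : Bool, ∑ y : Bool, G x y) = 1 ∧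
    (∀ x, G x true + G x false = A x) ∧
    (∀ y, G true y + G false y = B y)

/-- Orthogonal projection of `ℝ³` onto the plane with unit normal `nv`. -/
noncomputable def projPlane (nv v : EuclideanSpace ℝ (Fin 3)) : EuclideanSpace ℝ (Fin 3) :=
  v - (inner ℝ v nv : ℝ) • nv


/-!
Every Hermitian `2 × 2` matrix is `γ 𝟙 + v·σ`; it is positive semidefinite iff `‖v‖ ≤ γ`, and its
expectation in the state with Bloch vector `s` is `γ + ⟪s, v⟫`. States in the disk `R` only see
the projection `P_R v`, so an effect agreeing with `A^a(+)` on `R` has Bloch vector `c` with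
`P_R c = P_R a / 2`: on `R`, `A^a` acts as `A^{P_R a}`.

If a joint POVM `G x y = γ_xy 𝟙 + g_xy·σ` has marginals with Bloch vectors `c₁, c₂`, the `g_xy` sum
to `0`, hence `c₁ + c₂ = g₊₊ - g₋₋` and `c₁ - c₂ = g₊₋ - g₋₊`, and the triangle inequality with
`‖g_xy‖ ≤ γ_xy`, `∑ γ_xy = 1` gives `‖c₁ + c₂‖ + ‖c₁ - c₂‖ ≤ 1`. As `P_R` is a contraction this
yields the inequality. Conversely, under the inequality the observables `A^{P_R aᵢ}` themselves
are compatible, by an explicit joint POVM.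
-/

local notation "ℝ³" => EuclideanSpace ℝ (Fin 3)

noncomputable def blochMatrix (γ : ℝ) (v : ℝ³) : Matrix (Fin 2) (Fin 2) ℂ :=
  (γ : ℂ) • 1 + dotSigma v

lemma blochMatrix_eq_fin_two (γ : ℝ) (v : ℝ³) :
    blochMatrix γ v = !![(γ + v 2 : ℂ), v 0 - v 1 * Complex.I; v 0 + v 1 * Complex.I, γ - v 2] := by
  ext i j
  fin_cases i <;> fin_cases j <;> simp [blochMatrix, dotSigma, σx, σy, σz] <;> ring

lemma norm_sq_fin_three (v : ℝ³) : ‖v‖ ^ 2 = v 0 ^ 2 + v 1 ^ 2 + v 2 ^ 2 := by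
  simp [EuclideanSpace.norm_sq_eq, Fin.sum_univ_three]

lemma blochMatrix_add (γ δ : ℝ) (v w : ℝ³) :
    blochMatrix γ v + blochMatrix δ w = blochMatrix (γ + δ) (v + w) := by
  simp only [blochMatrix, dotSigma, PiLp.add_apply]
  push_cast
  module

lemma blochMatrix_one_zero : blochMatrix 1 0 = 1 := by
  simp [blochMatrix, dotSigma]

lemma ubObs_eq_blochMatrix (a : ℝ³) (x : Bool) :
    ubObs a x = blochMatrix (1 / 2) ((if x then (1 / 2 : ℝ) else -(1 / 2)) • a) := by
  simp only [ubObs, blochMatrix, dotSigma, PiLp.smul_apply, smul_eq_mul]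
  cases x <;> simp only [if_true, Bool.false_eq_true, if_false] <;> push_cast <;> module

lemma qubitState_eq_blochMatrix (s : ℝ³) : qubitState s = blochMatrix (1 / 2) ((1 / 2 : ℝ) • s) := by
  simp only [qubitState, blochMatrix, dotSigma, PiLp.smul_apply, smul_eq_mul]
  push_cast
  module

lemma trace_qubitState_mul_blochMatrix (s : ℝ³) (γ : ℝ) (v : ℝ³) :
    (qubitState s * blochMatrix γ v).trace = ((γ + inner ℝ s v : ℝ) : ℂ) := by
  rw [qubitState_eq_blochMatrix, blochMatrix_eq_fin_two, blochMatrix_eq_fin_two,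
    Matrix.trace_fin_two, PiLp.inner_apply, Fin.sum_univ_three]
  refine Complex.ext ?_ ?_ <;> simp [Matrix.mul_apply, Fin.sum_univ_two] <;> ring

lemma blochMatrix_inj {γ δ : ℝ} {v w : ℝ³} :
    blochMatrix γ v = blochMatrix δ w ↔ γ = δ ∧ v = w := by
  refine ⟨fun h => ?_, fun ⟨hγ, hv⟩ => hγ ▸ hv ▸ rfl⟩
  have htr : ∀ s, γ + inner ℝ s v = δ + inner ℝ s w := fun s => by
    have := congrArg (fun M => (qubitState s * M).trace) h
    simpa only [trace_qubitState_mul_blochMatrix, Complex.ofReal_inj] using this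
  have hγ : γ = δ := by simpa using htr 0
  refine ⟨hγ, ?_⟩
  have hvw := htr (v - w)
  rw [hγ, add_right_inj] at hvw
  rw [← sub_eq_zero, ← inner_self_eq_zero (𝕜 := ℝ), inner_sub_right, hvw, sub_self]

lemma isHermitian_blochMatrix (γ : ℝ) (v : ℝ³) : (blochMatrix γ v).IsHermitian := by
  rw [blochMatrix_eq_fin_two]
  ext i j
  fin_cases i <;> fin_cases j <;> simp [Complex.ext_iff]

lemma Matrix.IsHermitian.exists_blochMatrix_eq {M : Matrix (Fin 2) (Fin 2) ℂ}
    (hM : M.IsHermitian) : ∃ γ v, M = blochMatrix γ v := by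
  refine ⟨((M 0 0).re + (M 1 1).re) / 2,
    !₂[(M 0 1).re, -(M 0 1).im, ((M 0 0).re - (M 1 1).re) / 2], ?_⟩
  have h00 := congrArg Complex.im (hM.apply 0 0)
  have h11 := congrArg Complex.im (hM.apply 1 1)
  simp only [Complex.star_def, Complex.conj_im] at h00 h11
  have h10 : M 1 0 = star (M 0 1) := (hM.apply 1 0).symm
  rw [blochMatrix_eq_fin_two]
  ext i j
  fin_cases i <;> fin_cases j <;> simp [Complex.ext_iff, h10] <;> constructor <;> linarith

lemma dotSigma_mul_self (v : ℝ³) : dotSigma v * dotSigma v = ((‖v‖ ^ 2 : ℝ) : ℂ) • 1 := by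
  rw [norm_sq_fin_three]
  push_cast
  ext i j
  fin_cases i <;> fin_cases j <;> refine Complex.ext ?_ ?_ <;>
    simp [dotSigma, σx, σy, σz, Matrix.mul_apply, Fin.sum_univ_two, sq] <;> ring

lemma det_blochMatrix (γ : ℝ) (v : ℝ³) :
    (blochMatrix γ v).det = ((γ ^ 2 - ‖v‖ ^ 2 : ℝ) : ℂ) := by
  rw [blochMatrix_eq_fin_two, Matrix.det_fin_two_of, norm_sq_fin_three]
  push_cast
  linear_combination (v 1 : ℂ) ^ 2 * Complex.I_sq

lemma trace_blochMatrix (γ : ℝ) (v : ℝ³) : (blochMatrix γ v).trace = ((2 * γ : ℝ) : ℂ) := by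
  rw [blochMatrix_eq_fin_two, Matrix.trace_fin_two_of]
  push_cast
  ring

lemma posSemidef_blochMatrix_norm (v : ℝ³) : (blochMatrix ‖v‖ v).PosSemidef := by
  rcases eq_or_ne v 0 with rfl | hv
  · simpa [blochMatrix, dotSigma] using Matrix.PosSemidef.zero
  set M := blochMatrix ‖v‖ v
  have hsq : M * M = ((2 * ‖v‖ : ℝ) : ℂ) • M := by
    simp only [M, blochMatrix, add_mul, mul_add, Matrix.smul_mul, Matrix.mul_smul, mul_one,
      one_mul, dotSigma_mul_self]
    push_cast
    module
  have hv' : (2 * ‖v‖ : ℝ) ≠ 0 := by positivity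
  have hM : M = (((2 * ‖v‖)⁻¹ : ℝ) : ℂ) • (Mᴴ * M) := by
    rw [(isHermitian_blochMatrix ‖v‖ v).eq, hsq, smul_smul, ← Complex.ofReal_mul,
      inv_mul_cancel₀ hv', Complex.ofReal_one, one_smul]
  rw [hM]
  exact (Matrix.posSemidef_conjTranspose_mul_self M).smul (Complex.zero_le_real.mpr (by positivity))

lemma posSemidef_blochMatrix_iff {γ : ℝ} {v : ℝ³} :
    (blochMatrix γ v).PosSemidef ↔ ‖v‖ ≤ γ := by
  refine ⟨fun h => ?_, fun h => ?_⟩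
  · have htr := h.trace_nonneg
    have hdet := h.det_nonneg
    rw [trace_blochMatrix, Complex.zero_le_real] at htr
    rw [det_blochMatrix, Complex.zero_le_real] at hdet
    nlinarith [norm_nonneg v]
  · have hsplit : blochMatrix γ v = blochMatrix ‖v‖ v + ((γ - ‖v‖ : ℝ) : ℂ) • 1 := by
      simp only [blochMatrix]
      push_cast
      module
    rw [hsplit]
    exact (posSemidef_blochMatrix_norm v).add
      (Matrix.PosSemidef.one.smul (Complex.zero_le_real.mpr (sub_nonneg.mpr h)))

namespace PairCompatible

variable {A B : Bool → Matrix (Fin 2) (Fin 2) ℂ}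

lemma isHermitian_left (h : PairCompatible A B) (x : Bool) : (A x).IsHermitian := by
  obtain ⟨G, hG, -, hA, -⟩ := h
  rw [← hA x]
  exact (hG x true).isHermitian.add (hG x false).isHermitian

lemma isHermitian_right (h : PairCompatible A B) (y : Bool) : (B y).IsHermitian := by
  obtain ⟨G, hG, -, -, hB⟩ := h
  rw [← hB y]
  exact (hG true y).isHermitian.add (hG false y).isHermitian

lemma norm_add_add_norm_sub_le {γ₁ γ₂ : ℝ} {c₁ c₂ : ℝ³} (h : PairCompatible A B)
    (hA : A true = blochMatrix γ₁ c₁) (hB : B true = blochMatrix γ₂ c₂) :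
    ‖c₁ + c₂‖ + ‖c₁ - c₂‖ ≤ 1 := by
  obtain ⟨G, hG, hsum, hGA, hGB⟩ := h
  choose γ g hγg using fun x y => (hG x y).isHermitian.exists_blochMatrix_eq
  have hg : ∀ x y, ‖g x y‖ ≤ γ x y := fun x y =>
    posSemidef_blochMatrix_iff.mp (hγg x y ▸ hG x y)
  simp only [Fintype.sum_bool, hγg, blochMatrix_add, ← blochMatrix_one_zero] at hsum
  obtain ⟨hγ_sum, hg_sum⟩ := blochMatrix_inj.mp hsum
  rw [← hGA, hγg, hγg, blochMatrix_add] at hA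
  rw [← hGB, hγg, hγg, blochMatrix_add] at hB
  obtain ⟨-, rfl⟩ := blochMatrix_inj.mp hA.symm
  obtain ⟨-, rfl⟩ := blochMatrix_inj.mp hB.symm
  have hplus : (g true true + g true false) + (g true true + g false true)
      = g true true - g false false := by
    rw [← sub_eq_zero, ← hg_sum]
    abel
  have hminus : (g true true + g true false) - (g true true + g false true)
      = g true false - g false true := by abel
  rw [hplus, hminus]
  calc ‖g true true - g false false‖ + ‖g true false - g false true‖
      ≤ (‖g true true‖ + ‖g false false‖) + (‖g true false‖ + ‖g false true‖) :=
        add_le_add (norm_sub_le _ _) (norm_sub_le _ _)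
    _ ≤ 1 := by linarith [hg true true, hg true false, hg false true, hg false false]

end PairCompatible

/-- The joint POVM is `G x y = (1 + x y z) 𝟙 / 4 + (x b₁ + y b₂)·σ / 4` for signs `x, y = ±1`; the
correlation `z` is chosen so that its positivity constraints `‖b₁ ± b₂‖ ≤ 1 ± z` both reduce to
the hypothesis. -/
lemma pairCompatible_ubObs {b₁ b₂ : ℝ³} (h : ‖b₁ + b₂‖ + ‖b₁ - b₂‖ ≤ 2) :
    PairCompatible (ubObs b₁) (ubObs b₂) := by
  set z := (‖b₁ + b₂‖ - ‖b₁ - b₂‖) / 2 with hz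
  let sgn : Bool → ℝ := fun x => if x then 1 else -1
  refine ⟨fun x y => blochMatrix ((1 + sgn x * sgn y * z) / 4)
    ((1 / 4 : ℝ) • (sgn x • b₁ + sgn y • b₂)), fun x y => ?_, ?_, fun x => ?_, fun y => ?_⟩
  · rw [posSemidef_blochMatrix_iff, norm_smul]
    have hneg : ‖-b₁ - b₂‖ = ‖b₁ + b₂‖ := by rw [← norm_neg, neg_sub, sub_neg_eq_add, add_comm]
    cases x <;> cases y <;> simp [sgn, neg_add_eq_sub, ← sub_eq_add_neg, norm_sub_rev b₂] <;>
      linarith [hz]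
  · simp only [Fintype.sum_bool, blochMatrix_add, ← blochMatrix_one_zero]
    congr 1 <;> simp only [sgn, ↓reduceIte, Bool.false_eq_true] <;> first | module | ring
  · rw [blochMatrix_add, ubObs_eq_blochMatrix]
    cases x <;> congr 1 <;> simp only [sgn, ↓reduceIte, Bool.false_eq_true] <;> first | module | ring
  · rw [blochMatrix_add, ubObs_eq_blochMatrix]
    cases y <;> congr 1 <;> simp only [sgn, ↓reduceIte, Bool.false_eq_true] <;> first | module | ring

lemma Submodule.mem_orthogonal_of_inner_eq_zero_of_norm_le_one {E : Type*}
    [NormedAddCommGroup E] [InnerProductSpace ℝ E] {K : Submodule ℝ E} {u : E}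
    (h : ∀ s ∈ K, ‖s‖ ≤ 1 → inner ℝ s u = 0) : u ∈ Kᗮ := by
  intro s hs
  rcases eq_or_ne s 0 with rfl | hs0
  · exact inner_zero_left u
  have hs_norm : ‖s‖ ≠ 0 := norm_ne_zero_iff.mpr hs0
  have hunit := h (‖s‖⁻¹ • s) (K.smul_mem _ hs) (by
    rw [norm_smul, norm_inv, norm_norm, inv_mul_cancel₀ hs_norm])
  rw [real_inner_smul_left] at hunit
  exact (mul_eq_zero.mp hunit).resolve_left (inv_ne_zero hs_norm)

lemma projPlane_eq_starProjection {nv : ℝ³} (hn : ‖nv‖ = 1) (v : ℝ³) :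
    projPlane nv v = (ℝ ∙ nv)ᗮ.starProjection v := by
  rw [Submodule.starProjection_orthogonal_val, Submodule.starProjection_singleton, hn, projPlane,
    real_inner_comm]
  simp

section Restriction

variable (K : Submodule ℝ ℝ³) [K.HasOrthogonalProjection]

lemma exists_blochMatrix_eq_of_trace_eq_ubObs {M : Matrix (Fin 2) (Fin 2) ℂ} (hM : M.IsHermitian)
    {a : ℝ³}
    (h : ∀ s ∈ K, ‖s‖ ≤ 1 → (qubitState s * M).trace = (qubitState s * ubObs a true).trace) :
    ∃ γ c, M = blochMatrix γ c ∧ K.starProjection a = (2 : ℝ) • K.starProjection c := by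
  obtain ⟨γ, c, rfl⟩ := hM.exists_blochMatrix_eq
  have hreal : ∀ s ∈ K, ‖s‖ ≤ 1 → γ + inner ℝ s c = 1 / 2 + inner ℝ s ((1 / 2 : ℝ) • a) := by
    intro s hs hs1
    have := h s hs hs1
    rwa [ubObs_eq_blochMatrix, if_pos rfl, trace_qubitState_mul_blochMatrix,
      trace_qubitState_mul_blochMatrix, Complex.ofReal_inj] at this
  have hγ : γ = 1 / 2 := by simpa using hreal 0 K.zero_mem (by simp)
  have hperp : a - (2 : ℝ) • c ∈ Kᗮ := by
    refine Submodule.mem_orthogonal_of_inner_eq_zero_of_norm_le_one fun s hs hs1 => ?_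
    have := hreal s hs hs1
    rw [real_inner_smul_right] at this
    rw [inner_sub_right, real_inner_smul_right]
    linarith
  refine ⟨γ, c, rfl, ?_⟩
  rw [← sub_eq_zero, ← map_smul, ← map_sub]
  exact (K.starProjection_apply_eq_zero_iff).mpr hperp

lemma trace_qubitState_mul_ubObs_starProjection {s : ℝ³} (hs : s ∈ K) (a : ℝ³) (x : Bool) :
    (qubitState s * ubObs (K.starProjection a) x).trace = (qubitState s * ubObs a x).trace := by
  rw [ubObs_eq_blochMatrix, ubObs_eq_blochMatrix, trace_qubitState_mul_blochMatrix,
    trace_qubitState_mul_blochMatrix, inner_smul_right, inner_smul_right,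
    ← Submodule.inner_starProjection_left_eq_right, Submodule.starProjection_eq_self_iff.mpr hs]

end Restriction

theorem stmt5_general (nv a₁ a₂ : EuclideanSpace ℝ (Fin 3)) (hn : ‖nv‖ = 1) :
    (∃ B₁ B₂ : Bool → Matrix (Fin 2) (Fin 2) ℂ, PairCompatible B₁ B₂ ∧
      ∀ s : EuclideanSpace ℝ (Fin 3), ‖s‖ ≤ 1 → (inner ℝ s nv : ℝ) = 0 →
        (∀ x, (qubitState s * B₁ x).trace = (qubitState s * ubObs a₁ x).trace) ∧
        (∀ x, (qubitState s * B₂ x).trace = (qubitState s * ubObs a₂ x).trace))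
    ↔ ‖projPlane nv (a₁ + a₂)‖ + ‖projPlane nv (a₁ - a₂)‖ ≤ 2 := by
  set K := (ℝ ∙ nv)ᗮ
  have hK : ∀ s, (inner ℝ s nv : ℝ) = 0 ↔ s ∈ K := fun s =>
    Submodule.mem_orthogonal_singleton_iff_inner_left.symm
  simp only [projPlane_eq_starProjection hn, map_add, map_sub]
  constructor
  · rintro ⟨B₁, B₂, hB, hagree⟩
    obtain ⟨γ₁, c₁, hB₁, hc₁⟩ := exists_blochMatrix_eq_of_trace_eq_ubObs K
      (hB.isHermitian_left true) fun s hs hs1 => (hagree s hs1 ((hK s).mpr hs)).1 true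
    obtain ⟨γ₂, c₂, hB₂, hc₂⟩ := exists_blochMatrix_eq_of_trace_eq_ubObs K
      (hB.isHermitian_right true) fun s hs hs1 => (hagree s hs1 ((hK s).mpr hs)).2 true
    calc ‖K.starProjection a₁ + K.starProjection a₂‖ + ‖K.starProjection a₁ - K.starProjection a₂‖
        = 2 * (‖K.starProjection (c₁ + c₂)‖ + ‖K.starProjection (c₁ - c₂)‖) := by
          rw [hc₁, hc₂, map_add, map_sub, ← smul_add, ← smul_sub, norm_smul, norm_smul,
            Real.norm_two, mul_add]
      _ ≤ 2 * (‖c₁ + c₂‖ + ‖c₁ - c₂‖) := by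
          gcongr <;> exact K.norm_starProjection_apply_le _
      _ ≤ 2 := by linarith [hB.norm_add_add_norm_sub_le hB₁ hB₂]
  · intro h
    refine ⟨_, _, pairCompatible_ubObs h, fun s _ hs => ⟨fun x => ?_, fun x => ?_⟩⟩ <;>
      exact trace_qubitState_mul_ubObs_starProjection K ((hK s).mp hs) _ x

/-- The pair `{A^{a₁}, A^{a₂}}` of unbiased qubit observables is `S₀^(R)`-compatible
(for the disk `R` of Bloch vectors orthogonal to the unit vector `nv`) iff
`|P_R(a₁+a₂)| + |P_R(a₁−a₂)| ≤ 2`. -/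
theorem stmt5 (nv a₁ a₂ : EuclideanSpace ℝ (Fin 3)) (hn : ‖nv‖ = 1)
    (h₁ : ‖a₁‖ ≤ 1) (h₂ : ‖a₂‖ ≤ 1) :
    (∃ B₁ B₂ : Bool → Matrix (Fin 2) (Fin 2) ℂ, PairCompatible B₁ B₂ ∧
      ∀ s : EuclideanSpace ℝ (Fin 3), ‖s‖ ≤ 1 → (inner ℝ s nv : ℝ) = 0 →
        (∀ x, (qubitState s * B₁ x).trace = (qubitState s * ubObs a₁ x).trace) ∧
        (∀ x, (qubitState s * B₂ x).trace = (qubitState s * ubObs a₂ x).trace))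
    ↔ ‖projPlane nv (a₁ + a₂)‖ + ‖projPlane nv (a₁ - a₂)‖ ≤ 2 :=
  stmt5_general nv a₁ a₂ hn
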